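/- Let μ, τ be real numbers and σ > 0. The supremum of E[(X − τ)₊] over all real-valued random variables X (equivalently, Borel probability measures on ℝ) satisfying E[X] = μ and E[X²] = σ² + μ² equals ( (μ − τ) + √(σ² + (μ − τ)²) ) / 2. -/

import Mathlib

/-!
Write `(y)₊ = (y + |y|) / 2`. Then `E[(X - τ)₊] = (E[X - τ] + E|X - τ|) / 2`, with
`E[X - τ] = μ - τ` and, by Cauchy–Schwarz (nonnegativity of the variance of `|X - τ|`),
`E|X - τ| ≤ √E[(X - τ)²] = √(σ² + (μ - τ)²)`. The bound is attained by the law putting mass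
`(s + d) / (2s)` at `τ + s` and the rest at `τ - s`, where `d = μ - τ` and `s = √(σ² + d²)`:
then `|X - τ| = s` is constant, so Cauchy–Schwarz is an equality.
-/

open MeasureTheory ProbabilityTheory

lemma max_zero_eq_add_abs_div_two (x : ℝ) : max x 0 = (x + |x|) / 2 := by
  rcases le_total x 0 with h | h
  · rw [max_eq_right h, abs_of_nonpos h]; ring
  · rw [max_eq_left h, abs_of_nonneg h]; ring

section Moments

variable {Ω : Type*} [MeasurableSpace Ω] {m : Measure Ω} [IsProbabilityMeasure m] {f : Ω → ℝ}

lemma integral_abs_le_sqrt_integral_sq (hf : MemLp f 2 m) :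
    ∫ ω, |f ω| ∂m ≤ Real.sqrt (∫ ω, f ω ^ 2 ∂m) := by
  have hvar : 0 ≤ Var[|f|; m] := variance_nonneg _ _
  rw [variance_eq_sub hf.abs] at hvar
  apply Real.le_sqrt_of_sq_le
  simpa [sq_abs] using hvar

lemma integral_max_zero_le (hf : MemLp f 2 m) :
    ∫ ω, max (f ω) 0 ∂m ≤ (∫ ω, f ω ∂m + Real.sqrt (∫ ω, f ω ^ 2 ∂m)) / 2 := by
  have hf1 : Integrable f m := hf.integrable one_le_two
  simp only [max_zero_eq_add_abs_div_two]
  rw [integral_div, integral_add hf1 hf1.abs]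
  gcongr
  exact integral_abs_le_sqrt_integral_sq hf

lemma integral_sub_const_sq (hf : Integrable f m) (hf2 : Integrable (fun ω => f ω ^ 2) m)
    (c : ℝ) :
    ∫ ω, (f ω - c) ^ 2 ∂m = ∫ ω, f ω ^ 2 ∂m - 2 * c * ∫ ω, f ω ∂m + c ^ 2 := by
  have hexpand : (fun ω => (f ω - c) ^ 2) = fun ω => f ω ^ 2 - 2 * c * f ω + c ^ 2 := by
    funext ω; ring
  have hquad : Integrable (fun ω => f ω ^ 2 - 2 * c * f ω) m := hf2.sub (hf.const_mul _)
  rw [hexpand, integral_add hquad (integrable_const _),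
    integral_sub hf2 (hf.const_mul _), integral_const_mul]
  simp

lemma integral_max_sub_const_le (hf : Integrable f m) (hf2 : Integrable (fun ω => f ω ^ 2) m)
    (c : ℝ) :
    ∫ ω, max (f ω - c) 0 ∂m ≤
      (∫ ω, f ω ∂m - c + Real.sqrt (∫ ω, f ω ^ 2 ∂m - 2 * c * ∫ ω, f ω ∂m + c ^ 2)) / 2 := by
  have hL2 : MemLp (fun ω => f ω - c) 2 m :=
    ((memLp_two_iff_integrable_sq hf.aestronglyMeasurable).2 hf2).sub (memLp_const c)
  calc ∫ ω, max (f ω - c) 0 ∂m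
      ≤ (∫ ω, (f ω - c) ∂m + Real.sqrt (∫ ω, (f ω - c) ^ 2 ∂m)) / 2 := integral_max_zero_le hL2
    _ = _ := by rw [integral_sub_const_sq hf hf2, integral_sub hf (integrable_const c)]; simp

end Moments

section TwoPoint

variable {α : Type*} [MeasurableSpace α]

noncomputable def twoPoint (p : ℝ) (a b : α) : Measure α :=
  ENNReal.ofReal p • Measure.dirac a + ENNReal.ofReal (1 - p) • Measure.dirac b

lemma isProbabilityMeasure_twoPoint {p : ℝ} (hp₀ : 0 ≤ p) (hp₁ : p ≤ 1) (a b : α) :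
    IsProbabilityMeasure (twoPoint p a b) := by
  constructor
  simp [twoPoint, ← ENNReal.ofReal_add hp₀ (sub_nonneg.2 hp₁)]

lemma integrable_twoPoint [MeasurableSingletonClass α] (f : α → ℝ) (p : ℝ) (a b : α) : Integrable f (twoPoint p a b) :=
  ((integrable_dirac enorm_lt_top).smul_measure ENNReal.ofReal_ne_top).add_measure
    ((integrable_dirac enorm_lt_top).smul_measure ENNReal.ofReal_ne_top)

lemma integral_twoPoint [MeasurableSingletonClass α] (f : α → ℝ) {p : ℝ} (hp₀ : 0 ≤ p) (hp₁ : p ≤ 1) (a b : α) :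
    ∫ x, f x ∂twoPoint p a b = p * f a + (1 - p) * f b := by
  rw [twoPoint, integral_add_measure
      ((integrable_dirac enorm_lt_top).smul_measure ENNReal.ofReal_ne_top)
      ((integrable_dirac enorm_lt_top).smul_measure ENNReal.ofReal_ne_top),
    integral_smul_measure, integral_smul_measure, integral_dirac, integral_dirac,
    ENNReal.toReal_ofReal hp₀, ENNReal.toReal_ofReal (sub_nonneg.2 hp₁), smul_eq_mul, smul_eq_mul]

end TwoPoint

lemma exists_law_integral_max_sub_eq {τ d s : ℝ} (hs : 0 < s) (hds : |d| ≤ s) :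
    ∃ m : Measure ℝ, IsProbabilityMeasure m ∧
      Integrable (fun x : ℝ => x) m ∧ Integrable (fun x : ℝ => x ^ 2) m ∧
      ∫ x, x ∂m = τ + d ∧ ∫ x, x ^ 2 ∂m = (τ + d) ^ 2 + (s ^ 2 - d ^ 2) ∧
      ∫ x, max (x - τ) 0 ∂m = (d + s) / 2 := by
  set p := (s + d) / (2 * s)
  have hp : 2 * s * p = s + d := mul_div_cancel₀ _ (by positivity)
  have hp₀ : 0 ≤ p := div_nonneg (by linarith [neg_abs_le d]) (by positivity)
  have hp₁ : p ≤ 1 := (div_le_one (by positivity)).2 (by linarith [le_abs_self d])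
  refine ⟨twoPoint p (τ + s) (τ - s), isProbabilityMeasure_twoPoint hp₀ hp₁ _ _,
    integrable_twoPoint _ _ _ _, integrable_twoPoint _ _ _ _, ?_, ?_, ?_⟩ <;>
    rw [integral_twoPoint _ hp₀ hp₁]
  · linear_combination hp
  · linear_combination 2 * τ * hp
  · rw [max_eq_left (by linarith), max_eq_right (by linarith)]
    linear_combination hp / 2

/-- Sharp upper first partial moment (Lo-type) bound (C4): the supremum of
`E[(X - τ)₊]` over Borel probability measures on `ℝ` with mean `μ` and second
moment `σ² + μ²` equals `((μ - τ) + √(σ² + (μ - τ)²)) / 2`. -/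
theorem stmt_15 (μ τ σ : ℝ) (hσ : 0 < σ) :
    sSup {p : ℝ | ∃ m : Measure ℝ, IsProbabilityMeasure m ∧
        Integrable (fun x : ℝ => x) m ∧ Integrable (fun x : ℝ => x ^ 2) m ∧
        (∫ x, x ∂m) = μ ∧ (∫ x, x ^ 2 ∂m) = σ ^ 2 + μ ^ 2 ∧
        p = ∫ x, max (x - τ) 0 ∂m} =
      ((μ - τ) + Real.sqrt (σ ^ 2 + (μ - τ) ^ 2)) / 2 := by
  set s := Real.sqrt (σ ^ 2 + (μ - τ) ^ 2)
  have hs2 : s ^ 2 = σ ^ 2 + (μ - τ) ^ 2 := Real.sq_sqrt (by positivity)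
  have hs : 0 < s := Real.sqrt_pos.2 (by positivity)
  have hds : |μ - τ| ≤ s := Real.abs_le_sqrt (le_add_of_nonneg_left (sq_nonneg σ))
  refine IsGreatest.csSup_eq ⟨?_, ?_⟩
  · obtain ⟨m, hm, h1, h2, hmean, hsq, hpart⟩ := exists_law_integral_max_sub_eq (τ := τ) hs hds
    exact ⟨m, hm, h1, h2, by rw [hmean]; ring, by rw [hsq, hs2]; ring, hpart.symm⟩
  · rintro _ ⟨m, hm, h1, h2, hmean, hsq, rfl⟩
    calc ∫ x, max (x - τ) 0 ∂m
        ≤ (∫ x, x ∂m - τ + Real.sqrt (∫ x, x ^ 2 ∂m - 2 * τ * ∫ x, x ∂m + τ ^ 2)) / 2 :=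
          integral_max_sub_const_le h1 h2 τ
      _ = _ := by
          rw [hmean, hsq, show σ ^ 2 + μ ^ 2 - 2 * τ * μ + τ ^ 2 = s ^ 2 by rw [hs2]; ring,
            Real.sqrt_sq hs.le]
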